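/- The function G(y) = h(√y + 1/2) + y is concave and monotone decreasing on the interval [0, 1/4], where h is the binary entropy function with logarithm base 2. -/

import Mathlib

open Real

noncomputable def binEnt (p : ℝ) : ℝ := -(p * Real.logb 2 p) - (1 - p) * Real.logb 2 (1 - p)

/-!
With `t = √y`, the chain rule gives `G'(y) = 1 - S(2√y) / log 2`, where
`S(s) = (log (1 + s) - log (1 - s)) / s = ∑ 2 s^(2k) / (2k + 1)`.
All coefficients of this series are positive, so `S` is increasing on `(0, 1)` (hence `G'` is
decreasing and `G` is concave) and `S ≥ 2 > log 2` (hence `G' < 0` and `G` is decreasing).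
-/

noncomputable def logRatioSlope (s : ℝ) : ℝ := (log (1 + s) - log (1 - s)) / s

lemma hasSum_logRatioSlope {s : ℝ} (hs₀ : s ≠ 0) (hs : |s| < 1) :
    HasSum (fun k : ℕ => 2 / (2 * k + 1) * s ^ (2 * k)) (logRatioSlope s) := by
  have hterm : (fun k : ℕ => 2 / (2 * k + 1) * s ^ (2 * k)) =
      fun k : ℕ => 2 * (1 / (2 * k + 1)) * s ^ (2 * k + 1) / s := by
    funext k
    field_simp
    ring
  rw [hterm]
  exact (hasSum_log_sub_log_of_abs_lt_one hs).div_const s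

lemma two_le_logRatioSlope {s : ℝ} (hs₀ : s ≠ 0) (hs : |s| < 1) : 2 ≤ logRatioSlope s := by
  simpa using le_hasSum (hasSum_logRatioSlope hs₀ hs) 0 fun k _ => by rw [pow_mul]; positivity

lemma logRatioSlope_monotoneOn : MonotoneOn logRatioSlope (Set.Ioo 0 1) := by
  intro s ⟨hs₀, hs₁⟩ s' ⟨hs'₀, hs'₁⟩ hss'
  refine hasSum_le (fun k => by gcongr) (hasSum_logRatioSlope hs₀.ne' ?_)
    (hasSum_logRatioSlope hs'₀.ne' ?_)
  · rwa [abs_of_pos hs₀]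
  · rwa [abs_of_pos hs'₀]

lemma binEnt_eq_binEntropy_div (p : ℝ) : binEnt p = binEntropy p / log 2 := by
  simp only [binEnt, binEntropy, logb, log_inv]
  ring

lemma two_mul_sqrt_mem_Ioo {y : ℝ} (hy : y ∈ Set.Ioo (0 : ℝ) (1 / 4)) :
    2 * √y ∈ Set.Ioo (0 : ℝ) 1 := by
  have h : √y < 1 / 2 := (sqrt_lt' (by norm_num)).mpr (by linarith [hy.2])
  exact ⟨by linarith [sqrt_pos.mpr hy.1], by linarith⟩

lemma hasDerivAt_binEnt_sqrt_add_half {y : ℝ} (hy : y ∈ Set.Ioo (0 : ℝ) (1 / 4)) :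
    HasDerivAt (fun y => binEnt (√y + 1 / 2) + y) (1 - logRatioSlope (2 * √y) / log 2) y := by
  obtain ⟨ht₀, ht₁⟩ := two_mul_sqrt_mem_Ioo hy
  have hsqrt := (hasDerivAt_sqrt hy.1.ne').add_const (1 / 2 : ℝ)
  have hH := hasDerivAt_binEntropy (p := √y + 1 / 2) (by linarith) (by linarith)
  simp only [binEnt_eq_binEntropy_div]
  refine (((hH.comp y hsqrt).div_const (log 2)).add (hasDerivAt_id y)).congr_deriv ?_
  have h₁ : 1 - (√y + 1 / 2) = (1 - 2 * √y) / 2 := by ring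
  have h₂ : √y + 1 / 2 = (1 + 2 * √y) / 2 := by ring
  rw [h₁, h₂, log_div (by linarith) two_ne_zero, log_div (by linarith) two_ne_zero,
    logRatioSlope]
  field_simp
  ring

theorem stmt_2 :
    ConcaveOn ℝ (Set.Icc (0:ℝ) (1/4)) (fun y => binEnt (Real.sqrt y + 1/2) + y) ∧
    AntitoneOn (fun y => binEnt (Real.sqrt y + 1/2) + y) (Set.Icc (0:ℝ) (1/4)) := by
  have hcont : ContinuousOn (fun y => binEnt (√y + 1 / 2) + y) (Set.Icc 0 (1 / 4)) := by
    simp only [binEnt_eq_binEntropy_div]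
    fun_prop
  have hdiff : DifferentiableOn ℝ (fun y => binEnt (√y + 1 / 2) + y)
      (interior (Set.Icc 0 (1 / 4))) := by
    rw [interior_Icc]
    exact fun y hy => (hasDerivAt_binEnt_sqrt_add_half hy).differentiableAt.differentiableWithinAt
  have hderiv : ∀ y ∈ interior (Set.Icc (0 : ℝ) (1 / 4)),
      deriv (fun y => binEnt (√y + 1 / 2) + y) y = 1 - logRatioSlope (2 * √y) / log 2 := by
    rw [interior_Icc]
    exact fun y hy => (hasDerivAt_binEnt_sqrt_add_half hy).deriv
  refine ⟨AntitoneOn.concaveOn_of_deriv (convex_Icc _ _) hcont hdiff ?_,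
    antitoneOn_of_deriv_nonpos (convex_Icc _ _) hcont hdiff fun y hy => ?_⟩
  · intro a ha b hb hab
    rw [hderiv a ha, hderiv b hb]
    rw [interior_Icc] at ha hb
    have hmono := logRatioSlope_monotoneOn (two_mul_sqrt_mem_Ioo ha) (two_mul_sqrt_mem_Ioo hb)
      (by gcongr)
    gcongr
  · rw [hderiv y hy, sub_nonpos, one_le_div (log_pos one_lt_two)]
    rw [interior_Icc] at hy
    obtain ⟨hs₀, hs₁⟩ := two_mul_sqrt_mem_Ioo hy
    have h2 := two_le_logRatioSlope hs₀.ne' (by rwa [abs_of_pos hs₀])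
    linarith [log_two_lt_d9]
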